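/- arXiv:1601.07808 — 3 statements merged into one kernel-verified Lean document; each statement's English description precedes it below -/
import Mathlib

section
/- Let n ≥ 1 and let Φ : Matrix (Fin n) ℂ →ₗ[ℂ] Matrix (Fin n) ℂ be a positive trace-preserving linear map. Then Φ is unital (Φ 1 = 1) if and only if for every density matrix ρ there exists a doubly stochastic n × n real matrix B such that the vector of eigenvalues of Φ ρ, arranged in decreasing order, equals B applied to the vector of eigenvalues of ρ arranged in decreasing order. -/
open scoped Matrix ComplexOrder

/-- A density matrix: positive semidefinite with unit trace. -/
def IsDensityMatrix {n : ℕ} (ρ : Matrix (Fin n) (Fin n) ℂ) : Prop :=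
  ρ.PosSemidef ∧ ρ.trace = 1

/-- The (real) eigenvalues of a matrix, via its Hermitian spectral decomposition
(junk value `0` if the matrix is not Hermitian). -/
noncomputable def eigs {n : ℕ} (A : Matrix (Fin n) (Fin n) ℂ) : Fin n → ℝ :=
  if h : A.IsHermitian then h.eigenvalues else 0

/-- A linear map on matrices is positive if it preserves positive semidefiniteness. -/
def IsPositiveMap {n : ℕ}
    (Φ : Matrix (Fin n) (Fin n) ℂ →ₗ[ℂ] Matrix (Fin n) (Fin n) ℂ) : Prop :=
  ∀ A : Matrix (Fin n) (Fin n) ℂ, A.PosSemidef → (Φ A).PosSemidef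

/-- A linear map on matrices is trace-preserving if it preserves the trace. -/
def IsTracePreserving {n : ℕ}
    (Φ : Matrix (Fin n) (Fin n) ℂ →ₗ[ℂ] Matrix (Fin n) (Fin n) ℂ) : Prop :=
  ∀ A : Matrix (Fin n) (Fin n) ℂ, (Φ A).trace = A.trace


/-- The vector `v` rearranged in decreasing order. -/
noncomputable def sortDesc {n : ℕ} (v : Fin n → ℝ) : Fin n → ℝ :=
  fun i => v (Tuple.sort v i.rev)

/-- A real square matrix is doubly stochastic if its entries are nonnegative and
every row and every column sums to `1`. -/
def IsDoublyStochastic {n : ℕ} (B : Matrix (Fin n) (Fin n) ℝ) : Prop :=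
  (∀ i j, 0 ≤ B i j) ∧ (∀ i, ∑ j, B i j = 1) ∧ (∀ j, ∑ i, B i j = 1)

/-!
If `Φ` is unital, write `ρ = ∑ₖ λₖ uₖuₖ*` and `Φ ρ = ∑ⱼ μⱼ vⱼvⱼ*` and put
`Cⱼₖ = ⟨vⱼ, Φ (uₖuₖ*) vⱼ⟩`. Positivity of `Φ` makes `C` nonnegative, unitality makes
its rows sum to `⟨vⱼ, Φ 1 vⱼ⟩ = 1`, trace preservation makes its columns sum to
`tr (uₖuₖ*) = 1`, and linearity gives `μ = C λ`. Sorting the two spectra only permutes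
the rows and columns of `C`. Conversely, a doubly stochastic matrix fixes the constant
spectrum of the maximally mixed state `1 / n`, so `Φ (1 / n)` has constant spectrum
`1 / n`, i.e. `Φ (1 / n) = 1 / n`.
-/

open Matrix Unitary

namespace Matrix

variable {m R 𝕜 : Type*} [Fintype m] [DecidableEq m]

theorem trace_conjStarAlgAut [CommRing R] [StarRing R] (U : unitary (Matrix m m R))
    (X : Matrix m m R) : (conjStarAlgAut R _ U X).trace = X.trace := by
  rw [conjStarAlgAut_apply, trace_mul_cycle, coe_star_mul_self, one_mul]

theorem PosSemidef.conjStarAlgAut [CommRing R] [PartialOrder R] [StarRing R] [StarOrderedRing R]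
    {X : Matrix m m R} (hX : X.PosSemidef) (U : unitary (Matrix m m R)) :
    (Unitary.conjStarAlgAut R _ U X).PosSemidef := by
  simpa [star_eq_conjTranspose] using hX.mul_mul_conjTranspose_same (U : Matrix m m R)

theorem mulVec_const_of_mem_doublyStochastic
    [CommSemiring R] [PartialOrder R] [IsOrderedRing R]
    {M : Matrix m m R} (hM : M ∈ doublyStochastic R m) (c : R) :
    M *ᵥ Function.const m c = Function.const m c := by
  have : Function.const m c = c • (1 : m → R) := by ext; simp
  rw [this, mulVec_smul, mulVec_one_of_mem_doublyStochastic hM]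

theorem exists_mem_doublyStochastic_comp_eq_mulVec
    [Semiring R] [PartialOrder R] [IsOrderedRing R]
    {M : Matrix m m R} (hM : M ∈ doublyStochastic R m) {x y : m → R} (h : y = M *ᵥ x)
    (σ τ : Equiv.Perm m) : ∃ N ∈ doublyStochastic R m, y ∘ σ = N *ᵥ (x ∘ τ) :=
  ⟨M.submatrix σ τ, reindex_mem_doublyStochastic (e₁ := σ.symm) (e₂ := τ.symm) hM, by
    rw [submatrix_mulVec_equiv, Function.comp_assoc, Equiv.self_comp_symm, Function.comp_id, h]⟩

variable [RCLike 𝕜]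

theorem IsHermitian.eigenvalues_eq_const_iff {A : Matrix m m 𝕜} (hA : A.IsHermitian) (c : ℝ) :
    hA.eigenvalues = Function.const m c ↔ A = c • 1 := by
  constructor
  · intro h
    have hdiag : diagonal (RCLike.ofReal ∘ hA.eigenvalues) = c • (1 : Matrix m m 𝕜) := by
      ext i j
      simp [h, diagonal_apply, one_apply, RCLike.real_smul_eq_coe_mul]
    rw [hA.spectral_theorem, hdiag, conjStarAlgAut_apply, mul_smul_comm, mul_one, smul_mul_assoc,
      mul_star_self_of_mem hA.eigenvectorUnitary.2]
  · rintro rfl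
    ext i
    have : Nonempty m := ⟨i⟩
    simpa [← Algebra.algebraMap_eq_smul_one, spectrum.scalar_eq] using
      hA.eigenvalues_mem_spectrum_real i

end Matrix

section TransitionMatrix

variable {n : ℕ} (Φ : Matrix (Fin n) (Fin n) ℂ →ₗ[ℂ] Matrix (Fin n) (Fin n) ℂ)
  (U V : unitaryGroup (Fin n) ℂ)

-- `Cⱼₖ = ⟨vⱼ, Φ (uₖuₖ*) vⱼ⟩` for the columns `uₖ` of `U` and `vⱼ` of `V`.
noncomputable def transitionMatrix : Matrix (Fin n) (Fin n) ℝ :=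
  of fun j k => (conjStarAlgAut ℂ _ (star V) (Φ (conjStarAlgAut ℂ _ U (single k k 1))) j j).re

theorem transitionMatrix_mulVec (w : Fin n → ℝ) :
    transitionMatrix Φ U V *ᵥ w = fun j =>
      (conjStarAlgAut ℂ _ (star V) (Φ (conjStarAlgAut ℂ _ U (diagonal (RCLike.ofReal ∘ w))))
        j j).re := by
  ext j
  rw [← sum_single_eq_diagonal]
  simp only [map_sum, Matrix.sum_apply, Complex.re_sum, mulVec, dotProduct, transitionMatrix,
    of_apply]
  refine Finset.sum_congr rfl fun k _ => ?_
  have hsingle : single k k ((RCLike.ofReal ∘ w) k) = (w k : ℂ) • single k k (1 : ℂ) := by simp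
  rw [hsingle, map_smul, map_smul, map_smul, Matrix.smul_apply, smul_eq_mul,
    Complex.re_ofReal_mul, mul_comm]

theorem sum_transitionMatrix_apply_left (htp : IsTracePreserving Φ) (k : Fin n) :
    ∑ j, transitionMatrix Φ U V j k = 1 := by
  simp only [transitionMatrix, of_apply, ← Complex.re_sum]
  change (trace (_ : Matrix (Fin n) (Fin n) ℂ)).re = 1
  rw [trace_conjStarAlgAut, htp, trace_conjStarAlgAut, trace_single_eq_same,
    Complex.one_re]

theorem transitionMatrix_nonneg (hpos : IsPositiveMap Φ) (j k : Fin n) :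
    0 ≤ transitionMatrix Φ U V j k := by
  have hsingle : (single k k (1 : ℂ)).PosSemidef := by
    rw [← diagonal_single]
    exact PosSemidef.diagonal (Pi.single_nonneg.mpr zero_le_one)
  exact (Complex.nonneg_iff.mp
    ((hpos _ (hsingle.conjStarAlgAut U)).conjStarAlgAut (star V)).diag_nonneg).1

theorem transitionMatrix_mem_doublyStochastic (hpos : IsPositiveMap Φ)
    (htp : IsTracePreserving Φ) (hunital : Φ 1 = 1) :
    transitionMatrix Φ U V ∈ doublyStochastic ℝ (Fin n) := by
  refine mem_doublyStochastic.mpr ⟨transitionMatrix_nonneg Φ U V hpos, ?_, ?_⟩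
  · ext j
    simp [transitionMatrix_mulVec, hunital]
  · ext k
    simp [vecMul, dotProduct, sum_transitionMatrix_apply_left Φ U V htp]

theorem eigenvalues_eq_transitionMatrix_mulVec {ρ : Matrix (Fin n) (Fin n) ℂ}
    (hρ : ρ.IsHermitian) (hΦρ : (Φ ρ).IsHermitian) :
    hΦρ.eigenvalues =
      transitionMatrix Φ hρ.eigenvectorUnitary hΦρ.eigenvectorUnitary *ᵥ hρ.eigenvalues := by
  rw [transitionMatrix_mulVec, ← hρ.spectral_theorem, hΦρ.conjStarAlgAut_star_eigenvectorUnitary]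
  ext j
  simp

end TransitionMatrix

section SortedSpectra

variable {n : ℕ}

theorem eigs_of_isHermitian {A : Matrix (Fin n) (Fin n) ℂ} (hA : A.IsHermitian) :
    eigs A = hA.eigenvalues :=
  dif_pos hA

theorem eigs_eq_const_iff {A : Matrix (Fin n) (Fin n) ℂ} (hA : A.IsHermitian) (c : ℝ) :
    eigs A = Function.const _ c ↔ A = c • 1 := by
  rw [eigs_of_isHermitian hA, hA.eigenvalues_eq_const_iff]

theorem sortDesc_eq_comp (v : Fin n → ℝ) :
    sortDesc v = v ∘ (Fin.revPerm.trans (Tuple.sort v)) :=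
  rfl

theorem sortDesc_const (c : ℝ) : sortDesc (Function.const (Fin n) c) = Function.const _ c :=
  rfl

theorem eq_const_of_sortDesc_eq_const {v : Fin n → ℝ} {c : ℝ}
    (h : sortDesc v = Function.const _ c) : v = Function.const _ c := by
  rw [sortDesc_eq_comp] at h
  ext i
  simpa using congrFun h ((Fin.revPerm.trans (Tuple.sort v)).symm i)

theorem isDoublyStochastic_iff_mem_doublyStochastic {B : Matrix (Fin n) (Fin n) ℝ} :
    IsDoublyStochastic B ↔ B ∈ doublyStochastic ℝ (Fin n) :=
  mem_doublyStochastic_iff_sum.symm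

theorem exists_isDoublyStochastic_sortDesc_eigs_eq_mulVec
    {Φ : Matrix (Fin n) (Fin n) ℂ →ₗ[ℂ] Matrix (Fin n) (Fin n) ℂ} (hpos : IsPositiveMap Φ)
    (htp : IsTracePreserving Φ) (hunital : Φ 1 = 1) {ρ : Matrix (Fin n) (Fin n) ℂ}
    (hρ : ρ.PosSemidef) :
    ∃ B, IsDoublyStochastic B ∧ sortDesc (eigs (Φ ρ)) = B *ᵥ sortDesc (eigs ρ) := by
  have hΦρ := (hpos ρ hρ).isHermitian
  simp_rw [isDoublyStochastic_iff_mem_doublyStochastic, sortDesc_eq_comp,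
    eigs_of_isHermitian hρ.isHermitian, eigs_of_isHermitian hΦρ]
  exact exists_mem_doublyStochastic_comp_eq_mulVec
    (transitionMatrix_mem_doublyStochastic Φ _ _ hpos htp hunital)
    (eigenvalues_eq_transitionMatrix_mulVec Φ hρ.isHermitian hΦρ) _ _

end SortedSpectra

noncomputable def maximallyMixed (n : ℕ) : Matrix (Fin n) (Fin n) ℂ :=
  (n : ℝ)⁻¹ • 1

theorem natCast_smul_maximallyMixed {n : ℕ} (hn : 1 ≤ n) :
    (n : ℝ) • maximallyMixed n = 1 := by
  rw [maximallyMixed, smul_smul, mul_inv_cancel₀ (by positivity), one_smul]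

theorem isDensityMatrix_maximallyMixed {n : ℕ} (hn : 1 ≤ n) :
    IsDensityMatrix (maximallyMixed n) :=
  ⟨PosSemidef.one.smul (by positivity), by
    rw [maximallyMixed, trace_smul, trace_one, Fintype.card_fin, Complex.real_smul,
      Complex.ofReal_inv, Complex.ofReal_natCast, inv_mul_cancel₀ (by positivity)]⟩

theorem eigs_maximallyMixed (n : ℕ) : eigs (maximallyMixed n) = Function.const _ (n : ℝ)⁻¹ :=
  (eigs_eq_const_iff (PosSemidef.one.smul (by positivity)).isHermitian _).mpr rfl

/-- A positive trace-preserving linear map `Φ` is unital iff for every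
density matrix `ρ` the decreasingly ordered eigenvalue vector of `Φ ρ` is obtained from
that of `ρ` by applying a doubly stochastic matrix. -/
theorem unital_iff_eigenvalues_bistochastic {n : ℕ} (hn : 1 ≤ n)
    (Φ : Matrix (Fin n) (Fin n) ℂ →ₗ[ℂ] Matrix (Fin n) (Fin n) ℂ)
    (hpos : IsPositiveMap Φ) (htp : IsTracePreserving Φ) :
    Φ 1 = 1 ↔
      ∀ ρ : Matrix (Fin n) (Fin n) ℂ, IsDensityMatrix ρ →
        ∃ B : Matrix (Fin n) (Fin n) ℝ, IsDoublyStochastic B ∧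
          sortDesc (eigs (Φ ρ)) = B.mulVec (sortDesc (eigs ρ)) := by
  refine ⟨fun hunital ρ hρ =>
    exists_isDoublyStochastic_sortDesc_eigs_eq_mulVec hpos htp hunital hρ.1, fun h => ?_⟩
  obtain ⟨B, hB, hBeq⟩ := h _ (isDensityMatrix_maximallyMixed hn)
  rw [eigs_maximallyMixed, sortDesc_const, mulVec_const_of_mem_doublyStochastic
    (isDoublyStochastic_iff_mem_doublyStochastic.mp hB)] at hBeq
  have hfixed : Φ (maximallyMixed n) = maximallyMixed n :=
    (eigs_eq_const_iff (hpos _ (isDensityMatrix_maximallyMixed hn).1).isHermitian _).mp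
      (eq_const_of_sortDesc_eq_const hBeq)
  rw [← natCast_smul_maximallyMixed hn, LinearMap.map_smul_of_tower, hfixed]
end

section
/- Let n ≥ 1 and let Φ : Matrix (Fin n) ℂ →ₗ[ℂ] Matrix (Fin n) ℂ be a positive trace-preserving linear map. Then Φ is unital (Φ 1 = 1) if and only if Φ does not increase the purity, i.e. trace((Φ ρ)^2) ≤ trace(ρ^2) (as real numbers, these traces being real) for every density matrix ρ. -/
open scoped Matrix ComplexOrder

/-!
Write a Hermitian `A` as `∑ i, λᵢ • Pᵢ` with `Pᵢ` its rank-one spectral projections, so that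
`tr (A * A) = ∑ i, λᵢ ^ 2`. If `Φ` is positive, trace-preserving and unital, the matrices
`Qᵢ = Φ Pᵢ` are positive semidefinite, have unit trace and sum to `1`, so `(Re tr (Qᵢ * Qⱼ))ᵢⱼ` is
doubly stochastic and `tr (Φ A * Φ A) = ∑ i j, λᵢ λⱼ tr (Qᵢ * Qⱼ) ≤ ∑ i, λᵢ ^ 2`.

Conversely, purity is homogeneous of degree two, so the bound on density matrices extends to all
positive semidefinite matrices, in particular to `1`; together with `tr (Φ 1) = tr 1` it gives
`tr ((Φ 1 - 1)ᴴ * (Φ 1 - 1)) ≤ 0`.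
-/

open Matrix

section Trace

variable {m : Type*} [Fintype m]

open scoped MatrixOrder in
lemma Matrix.PosSemidef.trace_mul_nonneg [DecidableEq m] {𝕜 : Type*} [RCLike 𝕜]
    {A B : Matrix m m 𝕜} (hA : A.PosSemidef) (hB : B.PosSemidef) : 0 ≤ (A * B).trace := by
  obtain ⟨C, rfl⟩ := CStarAlgebra.nonneg_iff_eq_star_mul_self.mp hA.nonneg
  rw [← trace_mul_cycle]
  exact (hB.mul_mul_conjTranspose_same C).trace_nonneg

lemma Matrix.trace_conjStarAlgAut_s11 [DecidableEq m] (U : unitary (Matrix m m ℂ))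
    (X : Matrix m m ℂ) : trace (Unitary.conjStarAlgAut ℂ _ U X) = trace X := by
  rw [Unitary.conjStarAlgAut_apply, trace_mul_cycle, Unitary.coe_star_mul_self, one_mul]

lemma re_trace_ofReal_smul_mul_self (t : ℝ) (X : Matrix m m ℂ) :
    (trace ((t : ℂ) • X * (t : ℂ) • X)).re = t ^ 2 * (trace (X * X)).re := by
  rw [smul_mul_smul_comm, trace_smul, smul_eq_mul, ← Complex.ofReal_mul, Complex.re_ofReal_mul,
    sq]

lemma Matrix.IsHermitian.eq_one_of_re_trace_mul_self_le [DecidableEq m] {B : Matrix m m ℂ}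
    (hB : B.IsHermitian) (htr : B.trace = trace (1 : Matrix m m ℂ))
    (hsq : (trace (B * B)).re ≤ (trace (1 * 1 : Matrix m m ℂ)).re) : B = 1 := by
  have htrX : ((B - 1)ᴴ * (B - 1)).trace = (B * B).trace - trace (1 * 1 : Matrix m m ℂ) := by
    rw [(hB.sub isHermitian_one).eq]
    simp only [sub_mul, mul_sub, mul_one, one_mul, trace_sub, htr, trace_one]
    ring
  have hnonneg : 0 ≤ ((B - 1)ᴴ * (B - 1)).trace :=
    (posSemidef_conjTranspose_mul_self _).trace_nonneg
  have hnonpos : ((B - 1)ᴴ * (B - 1)).trace ≤ 0 :=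
    Complex.le_def.mpr ⟨by rw [htrX, Complex.sub_re, Complex.zero_re]; linarith,
      (Complex.nonneg_iff.mp hnonneg).2.symm⟩
  exact sub_eq_zero.mp (trace_conjTranspose_mul_self_eq_zero_iff.mp (le_antisymm hnonpos hnonneg))

end Trace

lemma dotProduct_mulVec_le_dotProduct_self {ι : Type*} [Fintype ι] [DecidableEq ι]
    {M : Matrix ι ι ℝ} (hM : M ∈ doublyStochastic ℝ ι) (x : ι → ℝ) : x ⬝ᵥ M *ᵥ x ≤ x ⬝ᵥ x := by
  obtain ⟨hnonneg, hrow, hcol⟩ := mem_doublyStochastic_iff_sum.mp hM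
  have hrow' : ∑ i, ∑ j, M i j * x i ^ 2 = x ⬝ᵥ x := by
    simp only [← Finset.sum_mul, hrow, one_mul, dotProduct, sq]
  have hcol' : ∑ i, ∑ j, M i j * x j ^ 2 = x ⬝ᵥ x := by
    rw [Finset.sum_comm]
    simp only [← Finset.sum_mul, hcol, one_mul, dotProduct, sq]
  have hdiff : 0 ≤ ∑ i, ∑ j, M i j * (x i - x j) ^ 2 :=
    Finset.sum_nonneg fun i _ => Finset.sum_nonneg fun j _ =>
      mul_nonneg (hnonneg i j) (sq_nonneg _)
  have hexpand : ∑ i, ∑ j, M i j * (x i - x j) ^ 2 =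
      ∑ i, ∑ j, M i j * x i ^ 2 + ∑ i, ∑ j, M i j * x j ^ 2 - 2 * (x ⬝ᵥ M *ᵥ x) := by
    simp only [dotProduct, mulVec, Finset.mul_sum, ← Finset.sum_sub_distrib,
      ← Finset.sum_add_distrib]
    refine Finset.sum_congr rfl fun i _ => Finset.sum_congr rfl fun j _ => ?_
    ring
  linarith

section TraceGram

variable {ι m : Type*} [Fintype ι] [Fintype m]

def traceGram (Q : ι → Matrix m m ℂ) : Matrix ι ι ℝ :=
  of fun i j => (trace (Q i * Q j)).re

lemma re_trace_sum_smul_mul_self (x : ι → ℝ) (Q : ι → Matrix m m ℂ) :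
    (trace ((∑ i, (x i : ℂ) • Q i) * ∑ i, (x i : ℂ) • Q i)).re = x ⬝ᵥ traceGram Q *ᵥ x := by
  simp only [Finset.sum_mul, Finset.mul_sum, smul_mul_smul_comm, trace_sum, trace_smul,
    Complex.re_sum, smul_eq_mul, ← Complex.ofReal_mul, Complex.re_ofReal_mul, dotProduct,
    mulVec, traceGram, of_apply]
  rw [Finset.sum_comm]
  refine Finset.sum_congr rfl fun i _ => Finset.sum_congr rfl fun j _ => ?_
  ring

lemma traceGram_mem_doublyStochastic [DecidableEq ι] [DecidableEq m] {Q : ι → Matrix m m ℂ}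
    (hQ : ∀ i, (Q i).PosSemidef) (hsum : ∑ i, Q i = 1) (htr : ∀ i, (Q i).trace = 1) :
    traceGram Q ∈ doublyStochastic ℝ ι := by
  refine mem_doublyStochastic_iff_sum.mpr ⟨fun i j => ?_, fun i => ?_, fun j => ?_⟩
  · exact (Complex.nonneg_iff.mp ((hQ i).trace_mul_nonneg (hQ j))).1
  · simp only [traceGram, of_apply, ← Complex.re_sum, ← trace_sum, ← Finset.mul_sum, hsum,
      mul_one, htr, Complex.one_re]
  · simp only [traceGram, of_apply, ← Complex.re_sum, ← trace_sum, ← Finset.sum_mul, hsum,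
      one_mul, htr, Complex.one_re]

end TraceGram

namespace Matrix.IsHermitian

variable {m : Type*} [Fintype m] [DecidableEq m] {A : Matrix m m ℂ} (hA : A.IsHermitian)

noncomputable def eigenprojection (i : m) : Matrix m m ℂ :=
  Unitary.conjStarAlgAut ℂ _ hA.eigenvectorUnitary (single i i 1)

lemma sum_eigenvalues_smul_eigenprojection :
    ∑ i, (hA.eigenvalues i : ℂ) • hA.eigenprojection i = A := by
  conv_rhs => rw [hA.spectral_theorem, ← sum_single_eq_diagonal]
  simp only [eigenprojection, map_sum, ← map_smul, smul_single, smul_eq_mul, mul_one,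
    Function.comp_apply, RCLike.ofReal_eq_complex_ofReal]

lemma sum_eigenprojection : ∑ i, hA.eigenprojection i = 1 := by
  simp only [eigenprojection, ← map_sum, sum_single_one, map_one]

lemma posSemidef_eigenprojection (i : m) : (hA.eigenprojection i).PosSemidef := by
  rw [eigenprojection, Unitary.conjStarAlgAut_apply, ← diagonal_single]
  exact (PosSemidef.diagonal (Pi.single_nonneg.mpr zero_le_one)).mul_mul_conjTranspose_same _

lemma trace_eigenprojection (i : m) : (hA.eigenprojection i).trace = 1 := by
  rw [eigenprojection, trace_conjStarAlgAut_s11, trace_single_eq_same]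

lemma traceGram_eigenprojection : traceGram hA.eigenprojection = 1 := by
  ext i j
  simp only [traceGram, of_apply, eigenprojection, ← map_mul, trace_conjStarAlgAut_s11, one_apply]
  by_cases hij : i = j
  · rw [hij, single_mul_single_same, one_mul, trace_single_eq_same, if_pos rfl, Complex.one_re]
  · rw [single_mul_single_of_ne (h := hij), trace_zero, if_neg hij, Complex.zero_re]

end Matrix.IsHermitian

section PositiveMap

variable {n : ℕ} {Φ : Matrix (Fin n) (Fin n) ℂ →ₗ[ℂ] Matrix (Fin n) (Fin n) ℂ}

theorem re_trace_map_mul_self_le (hpos : IsPositiveMap Φ) (htp : IsTracePreserving Φ)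
    (hunital : Φ 1 = 1) {A : Matrix (Fin n) (Fin n) ℂ} (hA : A.IsHermitian) :
    (trace (Φ A * Φ A)).re ≤ (trace (A * A)).re := by
  have hΦA : Φ A = ∑ i, (hA.eigenvalues i : ℂ) • Φ (hA.eigenprojection i) := by
    conv_lhs => rw [← hA.sum_eigenvalues_smul_eigenprojection]
    simp only [map_sum, map_smul]
  have hstoch : traceGram (fun i => Φ (hA.eigenprojection i)) ∈ doublyStochastic ℝ (Fin n) :=
    traceGram_mem_doublyStochastic (fun i => hpos _ (hA.posSemidef_eigenprojection i))
      (by rw [← map_sum, hA.sum_eigenprojection, hunital])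
      (fun i => (htp _).trans (hA.trace_eigenprojection i))
  calc (trace (Φ A * Φ A)).re
      = hA.eigenvalues ⬝ᵥ traceGram (fun i => Φ (hA.eigenprojection i)) *ᵥ hA.eigenvalues := by
        rw [hΦA, re_trace_sum_smul_mul_self]
    _ ≤ hA.eigenvalues ⬝ᵥ hA.eigenvalues := dotProduct_mulVec_le_dotProduct_self hstoch _
    _ = (trace (A * A)).re := by
        conv_rhs => rw [← hA.sum_eigenvalues_smul_eigenprojection]
        rw [re_trace_sum_smul_mul_self, hA.traceGram_eigenprojection, one_mulVec]

theorem re_trace_map_mul_self_le_of_forall_isDensityMatrix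
    (h : ∀ ρ, IsDensityMatrix ρ → (trace (Φ ρ * Φ ρ)).re ≤ (trace (ρ * ρ)).re)
    {A : Matrix (Fin n) (Fin n) ℂ} (hA : A.PosSemidef) :
    (trace (Φ A * Φ A)).re ≤ (trace (A * A)).re := by
  set t := ‖A.trace‖
  have ht : A.trace = t := Complex.eq_coe_norm_of_nonneg hA.trace_nonneg
  rcases eq_or_ne t 0 with h0 | h0
  · have : A = 0 := hA.trace_eq_zero_iff.mp (by rw [ht, h0, Complex.ofReal_zero])
    simp [this]
  have hρ : IsDensityMatrix ((t : ℂ)⁻¹ • A) :=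
    ⟨hA.smul (inv_nonneg.mpr (Complex.zero_le_real.mpr (norm_nonneg _))), by
      rw [trace_smul, ht, smul_eq_mul, inv_mul_cancel₀ (Complex.ofReal_ne_zero.mpr h0)]⟩
  have hA' : A = (t : ℂ) • ((t : ℂ)⁻¹ • A) := by
    rw [smul_smul, mul_inv_cancel₀ (Complex.ofReal_ne_zero.mpr h0), one_smul]
  rw [hA', map_smul, re_trace_ofReal_smul_mul_self, re_trace_ofReal_smul_mul_self]
  exact mul_le_mul_of_nonneg_left (h _ hρ) (sq_nonneg t)

end PositiveMap

theorem unital_iff_purity_nonincreasing_general {n : ℕ}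
    (Φ : Matrix (Fin n) (Fin n) ℂ →ₗ[ℂ] Matrix (Fin n) (Fin n) ℂ)
    (hpos : IsPositiveMap Φ) (htp : IsTracePreserving Φ) :
    Φ 1 = 1 ↔
      ∀ ρ : Matrix (Fin n) (Fin n) ℂ, IsDensityMatrix ρ →
        (Matrix.trace (Φ ρ * Φ ρ)).re ≤ (Matrix.trace (ρ * ρ)).re :=
  ⟨fun hunital _ hρ => re_trace_map_mul_self_le hpos htp hunital hρ.1.isHermitian,
    fun h => (hpos 1 PosSemidef.one).isHermitian.eq_one_of_re_trace_mul_self_le (htp 1)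
      (re_trace_map_mul_self_le_of_forall_isDensityMatrix h PosSemidef.one)⟩

/-- A positive trace-preserving linear map `Φ` is unital iff it does not
increase the purity `trace(ρ²)` of density matrices. -/
theorem unital_iff_purity_nonincreasing {n : ℕ} (hn : 1 ≤ n)
    (Φ : Matrix (Fin n) (Fin n) ℂ →ₗ[ℂ] Matrix (Fin n) (Fin n) ℂ)
    (hpos : IsPositiveMap Φ) (htp : IsTracePreserving Φ) :
    Φ 1 = 1 ↔
      ∀ ρ : Matrix (Fin n) (Fin n) ℂ, IsDensityMatrix ρ →
        (Matrix.trace (Φ ρ * Φ ρ)).re ≤ (Matrix.trace (ρ * ρ)).re :=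
  unital_iff_purity_nonincreasing_general Φ hpos htp
end

section
/- Let n ≥ 1. The set G of linear maps L : Matrix (Fin n) ℂ →ₗ[ℂ] Matrix (Fin n) ℂ such that for every t ≥ 0 the map exp(t • L) is positive, trace-preserving and unital, is a convex cone: if L₁, L₂ ∈ G and a, b ≥ 0 are real numbers, then a • L₁ + b • L₂ ∈ G. Likewise, the subset of G consisting of those L such that exp(t • L) is in addition completely positive for all t ≥ 0 is a convex cone contained in G. -/
open scoped Matrix ComplexOrder

/-- The exponential of an endomorphism of the finite-dimensional space of matrices,
computed via the exponential of its matrix representation in the standard basis. -/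
noncomputable def expEnd {n : ℕ}
    (L : Matrix (Fin n) (Fin n) ℂ →ₗ[ℂ] Matrix (Fin n) (Fin n) ℂ) :
    Matrix (Fin n) (Fin n) ℂ →ₗ[ℂ] Matrix (Fin n) (Fin n) ℂ :=
  Matrix.toLin (Matrix.stdBasis ℂ (Fin n) (Fin n)) (Matrix.stdBasis ℂ (Fin n) (Fin n))
    (NormedSpace.exp
      (LinearMap.toMatrix (Matrix.stdBasis ℂ (Fin n) (Fin n))
        (Matrix.stdBasis ℂ (Fin n) (Fin n)) L))


/-- The Choi matrix of a linear map on matrices. -/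
def ChoiMatrix {n : ℕ}
    (Φ : Matrix (Fin n) (Fin n) ℂ →ₗ[ℂ] Matrix (Fin n) (Fin n) ℂ) :
    Matrix (Fin n × Fin n) (Fin n × Fin n) ℂ :=
  Matrix.of fun ac bd => (Φ (Matrix.single ac.1 bd.1 1)) ac.2 bd.2

/-- A linear map on matrices is completely positive if its Choi matrix is
positive semidefinite. -/
def IsCompletelyPositive {n : ℕ}
    (Φ : Matrix (Fin n) (Fin n) ℂ →ₗ[ℂ] Matrix (Fin n) (Fin n) ℂ) : Prop :=
  (ChoiMatrix Φ).PosSemidef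

/-- Membership in the set `G` of generators of semigroups of positive,
trace-preserving, unital maps. -/
def InGenCone {n : ℕ}
    (L : Matrix (Fin n) (Fin n) ℂ →ₗ[ℂ] Matrix (Fin n) (Fin n) ℂ) : Prop :=
  ∀ t : ℝ, 0 ≤ t →
    IsPositiveMap (expEnd (t • L)) ∧ IsTracePreserving (expEnd (t • L)) ∧
      expEnd (t • L) 1 = 1

/-- Membership in the subset of `G` of generators whose semigroups are in addition
completely positive. -/
def InGenConeCP {n : ℕ}
    (L : Matrix (Fin n) (Fin n) ℂ →ₗ[ℂ] Matrix (Fin n) (Fin n) ℂ) : Prop :=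
  InGenCone L ∧ ∀ t : ℝ, 0 ≤ t → IsCompletelyPositive (expEnd (t • L))

/-! By the Lie product formula `exp (A + B) = lim (exp (A / k) * exp (B / k)) ^ k`, if `exp (t A)`
and `exp (t B)` lie in a closed submonoid `S` of a Banach algebra for all `t ≥ 0`, then so does
`exp (A + B)`; rescaling `L` by `a ≥ 0` only reparametrises time. Positive trace-preserving unital
maps form a closed submonoid of the endomorphisms of `Matrix (Fin n) (Fin n) ℂ`, and so do the
completely positive maps: these are exactly the maps with a Kraus representation (factor the
positive semidefinite Choi matrix as `Bᴴ * B`), and Kraus representations compose. -/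

open NormedSpace Filter Topology

theorem norm_pow_sub_pow_le {R : Type*} [NormedRing R] [NormOneClass R] {x y : R} {D : ℝ}
    (hx : ‖x‖ ≤ D) (hy : ‖y‖ ≤ D) (hD : 1 ≤ D) (k : ℕ) :
    ‖x ^ k - y ^ k‖ ≤ k * D ^ k * ‖x - y‖ := by
  induction k with
  | zero => simp
  | succ k ih =>
    have hDk : D ^ k ≤ D ^ (k + 1) := pow_le_pow_right₀ hD k.le_succ
    calc ‖x ^ (k + 1) - y ^ (k + 1)‖
        = ‖x ^ k * (x - y) + (x ^ k - y ^ k) * y‖ := by noncomm_ring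
      _ ≤ ‖x‖ ^ k * ‖x - y‖ + k * D ^ k * ‖x - y‖ * ‖y‖ := by
          refine (norm_add_le _ _).trans (add_le_add ?_ ?_)
          · exact (norm_mul_le _ _).trans (by gcongr; exact norm_pow_le x k)
          · exact (norm_mul_le _ _).trans (by gcongr)
      _ ≤ D ^ (k + 1) * ‖x - y‖ + k * D ^ k * ‖x - y‖ * D := by
          gcongr
          exact (pow_le_pow_left₀ (norm_nonneg x) hx k).trans hDk
      _ = (k + 1 : ℕ) * D ^ (k + 1) * ‖x - y‖ := by push_cast; ring

namespace NormedSpace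

variable {𝔸 : Type*} [NormedRing 𝔸] [NormedAlgebra ℝ 𝔸]

theorem norm_exp_le [NormOneClass 𝔸] (x : 𝔸) : ‖exp x‖ ≤ Real.exp ‖x‖ := by
  rw [exp_eq_tsum ℝ, Real.exp_eq_exp_ℝ]
  refine tsum_of_norm_bounded (expSeries_div_hasSum_exp ‖x‖) fun k => ?_
  rw [norm_smul, norm_inv, RCLike.norm_natCast, inv_mul_eq_div]
  gcongr
  exact norm_pow_le x k

theorem norm_exp_smul_le [NormOneClass 𝔸] {t : ℝ} (ht : 0 ≤ t) (x : 𝔸) :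
    ‖exp (t • x)‖ ≤ Real.exp (t * ‖x‖) := by
  simpa [norm_smul, abs_of_nonneg ht] using norm_exp_le (t • x)

variable [CompleteSpace 𝔸]

theorem tendsto_mul_norm_exp_mul_exp_sub_exp_add (A B : 𝔸) :
    Tendsto (fun k : ℕ => (k : ℝ) *
      ‖exp ((k : ℝ)⁻¹ • A) * exp ((k : ℝ)⁻¹ • B) - exp ((k : ℝ)⁻¹ • (A + B))‖)
      atTop (𝓝 0) := by
  set f : ℝ → 𝔸 := fun t => exp (t • A) * exp (t • B) - exp (t • (A + B))
  have hf : HasDerivAt f 0 0 := by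
    refine (((hasDerivAt_exp_smul_const A (0 : ℝ)).mul (hasDerivAt_exp_smul_const B 0)).sub
      (hasDerivAt_exp_smul_const (A + B) 0)).congr_deriv ?_
    simp
  have hlo : (fun t => ‖f t‖) =o[𝓝 0] fun t => t := by
    simpa [f] using (hasDerivAt_iff_isLittleO_nhds_zero.mp hf).norm_left
  refine (hlo.tendsto_div_nhds_zero.comp tendsto_inv_atTop_nhds_zero_nat).congr fun k => ?_
  simp only [Function.comp_apply, div_inv_eq_mul, mul_comm, f]

theorem tendsto_exp_mul_exp_pow [NormOneClass 𝔸] (A B : 𝔸) :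
    Tendsto (fun k : ℕ => (exp ((k : ℝ)⁻¹ • A) * exp ((k : ℝ)⁻¹ • B)) ^ k)
      atTop (𝓝 (exp (A + B))) := by
  set c := ‖A‖ + ‖B‖
  have bound : ∀ k : ℕ, 1 ≤ k →
      ‖(exp ((k : ℝ)⁻¹ • A) * exp ((k : ℝ)⁻¹ • B)) ^ k - exp (A + B)‖ ≤
        Real.exp c * ((k : ℝ) *
          ‖exp ((k : ℝ)⁻¹ • A) * exp ((k : ℝ)⁻¹ • B) - exp ((k : ℝ)⁻¹ • (A + B))‖) := by
    intro k hk
    have hk₀ : (k : ℝ) ≠ 0 := by positivity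
    have hs : (0 : ℝ) ≤ (k : ℝ)⁻¹ := by positivity
    set D := Real.exp ((k : ℝ)⁻¹ * c)
    have hpow : exp ((k : ℝ)⁻¹ • (A + B)) ^ k = exp (A + B) := by
      -- `exp_nsmul` is stated for normed `ℚ`-algebras; `exp` does not depend on that structure.
      let : NormedAlgebra ℚ 𝔸 := .restrictScalars ℚ ℝ 𝔸
      rw [← exp_nsmul, ← Nat.cast_smul_eq_nsmul ℝ, smul_smul, mul_inv_cancel₀ hk₀, one_smul]
    have hDk : D ^ k = Real.exp c := by
      rw [← Real.exp_nat_mul, ← mul_assoc, mul_inv_cancel₀ hk₀, one_mul]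
    have hX : ‖exp ((k : ℝ)⁻¹ • A) * exp ((k : ℝ)⁻¹ • B)‖ ≤ D := by
      calc _ ≤ Real.exp ((k : ℝ)⁻¹ * ‖A‖) * Real.exp ((k : ℝ)⁻¹ * ‖B‖) :=
            (norm_mul_le _ _).trans (by gcongr <;> exact norm_exp_smul_le hs _)
        _ = D := by rw [← Real.exp_add, ← mul_add]
    have hY : ‖exp ((k : ℝ)⁻¹ • (A + B))‖ ≤ D :=
      (norm_exp_smul_le hs _).trans (Real.exp_le_exp.mpr (by gcongr; exact norm_add_le A B))
    calc _ = ‖(exp ((k : ℝ)⁻¹ • A) * exp ((k : ℝ)⁻¹ • B)) ^ k -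
            exp ((k : ℝ)⁻¹ • (A + B)) ^ k‖ := by rw [hpow]
      _ ≤ k * D ^ k * ‖exp ((k : ℝ)⁻¹ • A) * exp ((k : ℝ)⁻¹ • B) -
            exp ((k : ℝ)⁻¹ • (A + B))‖ :=
          norm_pow_sub_pow_le hX hY (Real.one_le_exp (by positivity)) k
      _ = _ := by rw [hDk]; ring
  rw [tendsto_iff_norm_sub_tendsto_zero]
  refine squeeze_zero' (Eventually.of_forall fun k => norm_nonneg _)
    ((eventually_ge_atTop 1).mono bound) ?_
  simpa using (tendsto_mul_norm_exp_mul_exp_sub_exp_add A B).const_mul (Real.exp c)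

theorem _root_.Submonoid.exp_add_mem_of_isClosed [NormOneClass 𝔸] (S : Submonoid 𝔸)
    (hS : IsClosed (S : Set 𝔸)) {A B : 𝔸} (hA : ∀ t : ℝ, 0 ≤ t → exp (t • A) ∈ S)
    (hB : ∀ t : ℝ, 0 ≤ t → exp (t • B) ∈ S) : exp (A + B) ∈ S :=
  hS.mem_of_tendsto (tendsto_exp_mul_exp_pow A B) <| Eventually.of_forall fun k =>
    S.pow_mem (S.mul_mem (hA _ (by positivity)) (hB _ (by positivity))) k

end NormedSpace

namespace Matrix

theorem isClosed_setOf_posSemidef {m 𝕜 : Type*} [Fintype m] [RCLike 𝕜] :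
    IsClosed {A : Matrix m m 𝕜 | A.PosSemidef} := by
  simp only [posSemidef_iff_dotProduct_mulVec, IsHermitian, Set.ofPred_and, Set.ofPred_forall]
  exact (isClosed_eq continuous_id.matrix_conjTranspose continuous_id).inter <|
    isClosed_iInter fun x => isClosed_le continuous_const <|
      continuous_const.dotProduct (continuous_id.matrix_mulVec continuous_const)

theorem continuous_toLinAlgEquiv_apply {ι 𝕜 M : Type*} [Fintype ι] [DecidableEq ι]
    [NontriviallyNormedField 𝕜] [CompleteSpace 𝕜] [AddCommGroup M] [Module 𝕜 M]
    [TopologicalSpace M] [IsTopologicalAddGroup M] [ContinuousSMul 𝕜 M] [T2Space M]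
    (b : Module.Basis ι 𝕜 M) (x : M) :
    Continuous fun A : Matrix ι ι 𝕜 => toLinAlgEquiv b A x :=
  ((LinearMap.applyₗ x).comp (toLinAlgEquiv b).toLinearMap).continuous_of_finiteDimensional

theorem exp_add_mem_of_isClosed {ι 𝕜 : Type*} [Fintype ι] [DecidableEq ι] [Nonempty ι]
    [RCLike 𝕜] (S : Submonoid (Matrix ι ι 𝕜)) (hS : IsClosed (S : Set (Matrix ι ι 𝕜)))
    {A B : Matrix ι ι 𝕜} (hA : ∀ t : ℝ, 0 ≤ t → exp (t • A) ∈ S)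
    (hB : ∀ t : ℝ, 0 ≤ t → exp (t • B) ∈ S) : exp (A + B) ∈ S := by
  -- Any submultiplicative norm inducing the product topology will do.
  let : SeminormedRing (Matrix ι ι 𝕜) := Matrix.linftyOpSemiNormedRing
  let : NormedRing (Matrix ι ι 𝕜) := Matrix.linftyOpNormedRing
  let : NormedAlgebra ℝ (Matrix ι ι 𝕜) := Matrix.linftyOpNormedAlgebra
  exact S.exp_add_mem_of_isClosed hS hA hB

end Matrix

def HasKrausRepresentation {m : Type*} [Fintype m] (Φ : Matrix m m ℂ →ₗ[ℂ] Matrix m m ℂ) :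
    Prop :=
  ∃ (κ : Type) (_ : Fintype κ) (K : κ → Matrix m m ℂ), ∀ A, Φ A = ∑ r, K r * A * (K r)ᴴ

namespace HasKrausRepresentation

variable {m : Type*} [Fintype m]

theorem id [DecidableEq m] : HasKrausRepresentation (LinearMap.id : Matrix m m ℂ →ₗ[ℂ] _) :=
  ⟨Unit, inferInstance, fun _ => 1, fun A => by simp⟩

theorem comp {Φ Ψ : Matrix m m ℂ →ₗ[ℂ] Matrix m m ℂ} (hΦ : HasKrausRepresentation Φ)
    (hΨ : HasKrausRepresentation Ψ) : HasKrausRepresentation (Φ ∘ₗ Ψ) := by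
  obtain ⟨κ, _, K, hK⟩ := hΦ
  obtain ⟨ι, _, J, hJ⟩ := hΨ
  refine ⟨κ × ι, inferInstance, fun p => K p.1 * J p.2, fun A => ?_⟩
  rw [LinearMap.comp_apply, hJ, map_sum, Fintype.sum_prod_type, Finset.sum_comm]
  simp only [hK, Matrix.conjTranspose_mul, Matrix.mul_assoc]

end HasKrausRepresentation

section Choi

variable {n : ℕ}

theorem apply_eq_sum_choiMatrix (Φ : Matrix (Fin n) (Fin n) ℂ →ₗ[ℂ] Matrix (Fin n) (Fin n) ℂ)
    (A : Matrix (Fin n) (Fin n) ℂ) (c d : Fin n) :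
    Φ A c d = ∑ a, ∑ b, A a b * ChoiMatrix Φ (a, c) (b, d) := by
  conv_lhs => rw [A.matrix_eq_sum_single]
  simp only [map_sum, Matrix.sum_apply]
  refine Finset.sum_congr rfl fun a _ => Finset.sum_congr rfl fun b _ => ?_
  have hsingle : Matrix.single a b (A a b) = A a b • Matrix.single a b 1 := by
    rw [Matrix.smul_single, smul_eq_mul, mul_one]
  rw [hsingle, map_smul]
  rfl

theorem IsCompletelyPositive.hasKrausRepresentation
    {Φ : Matrix (Fin n) (Fin n) ℂ →ₗ[ℂ] Matrix (Fin n) (Fin n) ℂ} (hΦ : IsCompletelyPositive Φ) :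
    HasKrausRepresentation Φ := by
  open scoped MatrixOrder in
  obtain ⟨B, hB⟩ := CStarAlgebra.nonneg_iff_eq_star_mul_self.mp hΦ.nonneg
  refine ⟨Fin n × Fin n, inferInstance, fun p => Matrix.of fun c a => star (B p (a, c)),
    fun A => ?_⟩
  ext c d
  simp only [apply_eq_sum_choiMatrix Φ A c d, hB, Matrix.sum_apply, Matrix.mul_apply,
    Matrix.star_apply, Matrix.conjTranspose_apply, Matrix.of_apply, star_star, Finset.mul_sum,
    Finset.sum_mul]
  rw [Finset.sum_comm_cycle]
  refine Finset.sum_congr rfl fun p _ => ?_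
  rw [Finset.sum_comm]
  exact Finset.sum_congr rfl fun b _ => Finset.sum_congr rfl fun a _ => by ring

theorem HasKrausRepresentation.isCompletelyPositive
    {Φ : Matrix (Fin n) (Fin n) ℂ →ₗ[ℂ] Matrix (Fin n) (Fin n) ℂ} (hΦ : HasKrausRepresentation Φ) :
    IsCompletelyPositive Φ := by
  obtain ⟨κ, _, K, hK⟩ := hΦ
  have hChoi : ChoiMatrix Φ = (Matrix.of fun r (p : Fin n × Fin n) => star (K r p.2 p.1))ᴴ *
      Matrix.of fun r (p : Fin n × Fin n) => star (K r p.2 p.1) := by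
    ext ⟨a, c⟩ ⟨b, d⟩
    simp [ChoiMatrix, hK, Matrix.sum_apply, Matrix.mul_apply, Matrix.single, ite_and]
  rw [IsCompletelyPositive, hChoi]
  exact Matrix.posSemidef_conjTranspose_mul_self _

end Choi

def ptuMaps (n : ℕ) : Submonoid (Module.End ℂ (Matrix (Fin n) (Fin n) ℂ)) where
  carrier := {Φ | IsPositiveMap Φ ∧ IsTracePreserving Φ ∧ Φ 1 = 1}
  mul_mem' := fun ⟨hΦ, hΦ', hΦ''⟩ ⟨hΨ, hΨ', hΨ''⟩ =>
    ⟨fun A hA => hΦ _ (hΨ A hA), fun A => (hΦ' _).trans (hΨ' A),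
      by rw [Module.End.mul_apply, hΨ'', hΦ'']⟩
  one_mem' := ⟨fun _ h => h, fun _ => rfl, rfl⟩

def cpMaps (n : ℕ) : Submonoid (Module.End ℂ (Matrix (Fin n) (Fin n) ℂ)) where
  carrier := {Φ | IsCompletelyPositive Φ}
  mul_mem' hΦ hΨ :=
    (hΦ.hasKrausRepresentation.comp hΨ.hasKrausRepresentation).isCompletelyPositive
  one_mem' := HasKrausRepresentation.id.isCompletelyPositive

section Generators

variable {n : ℕ}

theorem isClosed_preimage_ptuMaps :
    IsClosed (Matrix.toLinAlgEquiv (Matrix.stdBasis ℂ (Fin n) (Fin n)) ⁻¹' ptuMaps n) := by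
  have hcont := Matrix.continuous_toLinAlgEquiv_apply (Matrix.stdBasis ℂ (Fin n) (Fin n))
  simp only [ptuMaps, IsPositiveMap, IsTracePreserving, Submonoid.coe_set_mk,
    Subsemigroup.coe_set_mk, Set.ofPred_and, Set.ofPred_forall, Set.preimage_inter,
    Set.preimage_iInter, Set.preimage_ofPred_eq]
  exact (isClosed_iInter fun A => isClosed_iInter fun _ =>
      Matrix.isClosed_setOf_posSemidef.preimage (hcont A)).inter <|
    (isClosed_iInter fun A => isClosed_eq (hcont A).matrix_trace continuous_const).inter
      (isClosed_eq (hcont 1) continuous_const)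

theorem isClosed_preimage_cpMaps :
    IsClosed (Matrix.toLinAlgEquiv (Matrix.stdBasis ℂ (Fin n) (Fin n)) ⁻¹' cpMaps n) := by
  have hcont := Matrix.continuous_toLinAlgEquiv_apply (Matrix.stdBasis ℂ (Fin n) (Fin n))
  refine Matrix.isClosed_setOf_posSemidef.preimage (f := fun M => ChoiMatrix _) ?_
  exact continuous_pi fun ac => continuous_pi fun bd => (hcont _).matrix_elem ac.2 bd.2

theorem expEnd_eq (L : Module.End ℂ (Matrix (Fin n) (Fin n) ℂ)) :
    expEnd L = Matrix.toLinAlgEquiv (Matrix.stdBasis ℂ (Fin n) (Fin n))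
      (exp (LinearMap.toMatrixAlgEquiv (Matrix.stdBasis ℂ (Fin n) (Fin n)) L)) :=
  rfl

def GeneratesSemigroupIn (S : Submonoid (Module.End ℂ (Matrix (Fin n) (Fin n) ℂ)))
    (L : Module.End ℂ (Matrix (Fin n) (Fin n) ℂ)) : Prop :=
  ∀ t : ℝ, 0 ≤ t → expEnd (t • L) ∈ S

theorem inGenCone_iff {L : Module.End ℂ (Matrix (Fin n) (Fin n) ℂ)} :
    InGenCone L ↔ GeneratesSemigroupIn (ptuMaps n) L :=
  Iff.rfl

theorem inGenConeCP_iff {L : Module.End ℂ (Matrix (Fin n) (Fin n) ℂ)} :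
    InGenConeCP L ↔ GeneratesSemigroupIn (ptuMaps n ⊓ cpMaps n) L :=
  forall₂_and.symm

namespace GeneratesSemigroupIn

variable {S : Submonoid (Module.End ℂ (Matrix (Fin n) (Fin n) ℂ))}
  {L L₁ L₂ : Module.End ℂ (Matrix (Fin n) (Fin n) ℂ)}

theorem smul (h : GeneratesSemigroupIn S L) {a : ℝ} (ha : 0 ≤ a) :
    GeneratesSemigroupIn S (a • L) := fun t ht => by
  rw [smul_smul]
  exact h _ (mul_nonneg ht ha)

theorem expEnd_add_mem (hn : 1 ≤ n)
    (hS : IsClosed (Matrix.toLinAlgEquiv (Matrix.stdBasis ℂ (Fin n) (Fin n)) ⁻¹' S))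
    (h₁ : GeneratesSemigroupIn S L₁) (h₂ : GeneratesSemigroupIn S L₂) :
    expEnd (L₁ + L₂) ∈ S := by
  have : Nonempty (Fin n) := ⟨⟨0, hn⟩⟩
  set b := Matrix.stdBasis ℂ (Fin n) (Fin n)
  have hmem : ∀ L, GeneratesSemigroupIn S L → ∀ t : ℝ, 0 ≤ t →
      exp (t • LinearMap.toMatrixAlgEquiv b L) ∈ S.comap (Matrix.toLinAlgEquiv b) := by
    intro L hL t ht
    rw [Submonoid.mem_comap, ← LinearMapClass.map_smul_of_tower, ← expEnd_eq]
    exact hL t ht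
  have := Matrix.exp_add_mem_of_isClosed _ hS (hmem L₁ h₁) (hmem L₂ h₂)
  rwa [← map_add, Submonoid.mem_comap, ← expEnd_eq] at this

theorem add (hn : 1 ≤ n)
    (hS : IsClosed (Matrix.toLinAlgEquiv (Matrix.stdBasis ℂ (Fin n) (Fin n)) ⁻¹' S))
    (h₁ : GeneratesSemigroupIn S L₁) (h₂ : GeneratesSemigroupIn S L₂) :
    GeneratesSemigroupIn S (L₁ + L₂) := fun t ht => by
  rw [smul_add]
  exact expEnd_add_mem hn hS (h₁.smul ht) (h₂.smul ht)

end GeneratesSemigroupIn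

end Generators

/-- The generators of semigroups of positive, trace-preserving, unital
maps form a convex cone; the generators of semigroups of completely positive,
trace-preserving, unital maps form a convex cone contained in it. -/
theorem generators_form_convex_cone {n : ℕ} (hn : 1 ≤ n) :
    (∀ L₁ L₂ : Matrix (Fin n) (Fin n) ℂ →ₗ[ℂ] Matrix (Fin n) (Fin n) ℂ,
      InGenCone L₁ → InGenCone L₂ → ∀ a b : ℝ, 0 ≤ a → 0 ≤ b →
        InGenCone (a • L₁ + b • L₂)) ∧
    (∀ L₁ L₂ : Matrix (Fin n) (Fin n) ℂ →ₗ[ℂ] Matrix (Fin n) (Fin n) ℂ,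
      InGenConeCP L₁ → InGenConeCP L₂ → ∀ a b : ℝ, 0 ≤ a → 0 ≤ b →
        InGenConeCP (a • L₁ + b • L₂)) ∧
    (∀ L : Matrix (Fin n) (Fin n) ℂ →ₗ[ℂ] Matrix (Fin n) (Fin n) ℂ,
      InGenConeCP L → InGenCone L) := by
  have cone : ∀ S : Submonoid (Module.End ℂ (Matrix (Fin n) (Fin n) ℂ)),
      IsClosed (Matrix.toLinAlgEquiv (Matrix.stdBasis ℂ (Fin n) (Fin n)) ⁻¹' S) →
      ∀ L₁ L₂, GeneratesSemigroupIn S L₁ → GeneratesSemigroupIn S L₂ →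
        ∀ a b : ℝ, 0 ≤ a → 0 ≤ b → GeneratesSemigroupIn S (a • L₁ + b • L₂) :=
    fun S hS L₁ L₂ h₁ h₂ a b ha hb => (h₁.smul ha).add hn hS (h₂.smul hb)
  simp only [inGenCone_iff, inGenConeCP_iff]
  exact ⟨cone _ isClosed_preimage_ptuMaps,
    cone (ptuMaps n ⊓ cpMaps n) (isClosed_preimage_ptuMaps.inter isClosed_preimage_cpMaps),
    fun L h t ht => (Submonoid.mem_inf.mp (h t ht)).1⟩
end
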